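/- arXiv:1812.10916 — 2 statements merged into one kernel-verified Lean document; each statement's English description precedes it below -/
import Mathlib

section
/- Let W, X, Y be finite sets, let f_X : W → X and f_Y : W → Y be functions, and let E be a closed convex set of pmfs on W. For a pmf P on W, write P_{X×Y} for the pmf on X × Y induced by the map w ↦ (f_X(w), f_Y(w)), and P_Y for the pmf on Y induced by f_Y. Fix N ≥ 1 and y^N ∈ Y^N, and define T(y^N) = { x^N ∈ X^N : there exists P ∈ E with P_{X×Y} equal to the type of the paired sequence ((x_1,y_1),…,(x_N,y_N)) }. Then the cardinality of T(y^N) satisfies |T(y^N)| ≤ sup over P ∈ E with P_Y equal to the type of y^N of 2^{N·H(X|Y)_{P_{X×Y}}} (in particular, if T(y^N) is nonempty then log₂|T(y^N)| ≤ sup_{P ∈ E, P_Y = type of y^N} N·H(X|Y)_{P_{X×Y}}). -/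
open Finset

/-- The type (empirical distribution) of a sequence `w : Fin N → W`. -/
noncomputable def typePmf {W : Type*} [DecidableEq W] {N : ℕ} (w : Fin N → W) (a : W) : ℝ :=
  ((Finset.univ.filter (fun k => w k = a)).card : ℝ) / N

/-- The pmf on `X × Y` induced from a pmf `P` on `W` by `w ↦ (f_X w, f_Y w)`. -/
noncomputable def inducedXY {W X Y : Type*} [Fintype W] [DecidableEq X] [DecidableEq Y]
    (fX : W → X) (fY : W → Y) (P : W → ℝ) (p : X × Y) : ℝ :=
  ∑ w, if fX w = p.1 ∧ fY w = p.2 then P w else 0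

/-- The pmf on `Y` induced from a pmf `P` on `W` by `f_Y`. -/
noncomputable def inducedY {W Y : Type*} [Fintype W] [DecidableEq Y]
    (fY : W → Y) (P : W → ℝ) (y : Y) : ℝ :=
  ∑ w, if fY w = y then P w else 0

/-- The base-2 conditional entropy `H(X|Y)_P` of a pmf `P` on a finite product `X × Y`. -/
noncomputable def condEntropy2 {X Y : Type*} [Fintype X] [Fintype Y] (P : X × Y → ℝ) : ℝ :=
  -∑ p : X × Y, if 0 < P p then P p * Real.logb 2 (P p / (∑ x, P (x, p.2))) else 0

private lemma aux_two_rpow_convex : ConvexOn ℝ Set.univ (fun z : ℝ => (2:ℝ) ^ z) := by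
  refine ⟨convex_univ, fun p _ q _ a b ha hb hab => ?_⟩
  simp only [smul_eq_mul]
  rw [Real.rpow_def_of_pos (by norm_num : (0:ℝ) < 2),
    Real.rpow_def_of_pos (by norm_num : (0:ℝ) < 2),
    Real.rpow_def_of_pos (by norm_num : (0:ℝ) < 2)]
  have h := convexOn_exp.2 (Set.mem_univ (Real.log 2 * p)) (Set.mem_univ (Real.log 2 * q)) ha hb hab
  simp only [smul_eq_mul] at h
  calc Real.exp (Real.log 2 * (a * p + b * q))
      = Real.exp (a * (Real.log 2 * p) + b * (Real.log 2 * q)) := by ring_nf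
    _ ≤ a * Real.exp (Real.log 2 * p) + b * Real.exp (Real.log 2 * q) := h

private lemma aux_prod_rpow {α : Type*} [Fintype α] (e : α → ℝ) :
    ∏ p, (2:ℝ) ^ e p = (2:ℝ) ^ (∑ p, e p) := by
  simp only [Real.rpow_def_of_pos (by norm_num : (0:ℝ) < 2)]
  rw [← Real.exp_sum, Finset.mul_sum]

private lemma aux_inducedY_eq {W X Y : Type*} [Fintype W] [Fintype X] [DecidableEq X]
    [DecidableEq Y] (fX : W → X) (fY : W → Y) (P : W → ℝ) (b : Y) :
    inducedY fY P b = ∑ a, inducedXY fX fY P (a, b) := by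
  unfold inducedY inducedXY
  rw [Finset.sum_comm]
  refine Finset.sum_congr rfl fun w _ => ?_
  by_cases h : fY w = b <;> simp [h]

private lemma aux_type_marg {X Y : Type*} [Fintype X] [DecidableEq X] [DecidableEq Y] {N : ℕ}
    (x : Fin N → X) (y : Fin N → Y) (b : Y) :
    ∑ a, typePmf (fun k => (x k, y k)) (a, b) = typePmf y b := by
  simp only [typePmf]
  rw [← Finset.sum_div]
  congr 1
  rw [← Nat.cast_sum]
  congr 1
  conv_rhs => rw [Finset.card_eq_sum_card_fiberwise
    (f := fun k => x k) (t := Finset.univ) (fun k _ => Finset.mem_univ _)]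
  refine Finset.sum_congr rfl fun a _ => ?_
  congr 1
  ext k
  simp only [Finset.mem_filter, Finset.mem_univ, true_and, Prod.mk.injEq]
  tauto

private lemma aux_condEntropy2_le {X Y : Type*} [Fintype X] [Fintype Y] (Q : X × Y → ℝ)
    (hQ0 : ∀ p, 0 ≤ Q p) (hcol : ∀ b, ∑ a, Q (a, b) ≤ 1) :
    condEntropy2 Q ≤ (Fintype.card (X × Y) : ℝ) / Real.log 2 := by
  have hl2 : 0 < Real.log 2 := Real.log_pos one_lt_two
  unfold condEntropy2
  rw [← Finset.sum_neg_distrib]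
  have hbound : ∀ p : X × Y,
      -(if 0 < Q p then Q p * Real.logb 2 (Q p / ∑ a, Q (a, p.2)) else 0) ≤ 1 / Real.log 2 := by
    intro p
    split_ifs with h
    · set s := ∑ a, Q (a, p.2) with hs
      have hQs : Q p ≤ s := by
        rw [hs]
        simpa using Finset.single_le_sum (f := fun a => Q (a, p.2))
          (fun a _ => hQ0 _) (Finset.mem_univ p.1)
      have hspos : 0 < s := lt_of_lt_of_le h hQs
      have hdiv : Real.log s - Real.log (Q p) = Real.log (s / Q p) :=
        (Real.log_div hspos.ne' h.ne').symm
      have hlog := Real.log_le_sub_one_of_pos (div_pos hspos h)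
      have h1 : Q p * (s / Q p) = s := mul_div_cancel₀ s h.ne'
      have key : Q p * (Real.log s - Real.log (Q p)) ≤ 1 := by
        rw [hdiv]
        nlinarith [hcol p.2, hQ0 p]
      have heq : -(Q p * Real.logb 2 (Q p / s))
          = Q p * (Real.log s - Real.log (Q p)) / Real.log 2 := by
        rw [Real.logb, Real.log_div h.ne' hspos.ne']; ring
      rw [heq]
      gcongr
    · rw [neg_zero]; positivity
  calc ∑ p : X × Y, -(if 0 < Q p then Q p * Real.logb 2 (Q p / ∑ a, Q (a, p.2)) else 0)
      ≤ ∑ _p : X × Y, 1 / Real.log 2 := Finset.sum_le_sum fun p _ => hbound p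
    _ = (Fintype.card (X × Y) : ℝ) / Real.log 2 := by
        rw [Finset.sum_const, Finset.card_univ, nsmul_eq_mul, mul_one_div]
/-- Lemma 1: for a closed convex set `E` of pmfs on a finite set `W`,
functions `f_X : W → X`, `f_Y : W → Y`, `N ≥ 1` and `y^N ∈ Y^N`, the set
`T(y^N) = {x^N : ∃ P ∈ E, P_{X×Y} = type of ((x_k, y_k))_k}` satisfies
`|T(y^N)| ≤ sup { 2^{N·H(X|Y)_{P_{X×Y}}} : P ∈ E, P_Y = type of y^N }`. -/
theorem stmt_0 {W X Y : Type*} [Fintype W] [Fintype X] [Fintype Y]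
    [DecidableEq W] [DecidableEq X] [DecidableEq Y]
    (fX : W → X) (fY : W → Y) (E : Set (W → ℝ))
    (hEpmf : ∀ P ∈ E, (∀ w, 0 ≤ P w) ∧ ∑ w, P w = 1)
    (hEclosed : IsClosed E) (hEconvex : Convex ℝ E)
    (N : ℕ) (hN : 1 ≤ N) (y : Fin N → Y) :
    ((Set.ncard {x : Fin N → X | ∃ P ∈ E,
        ∀ p : X × Y, inducedXY fX fY P p = typePmf (fun k => (x k, y k)) p} : ℕ) : ℝ) ≤
      sSup {r : ℝ | ∃ P ∈ E, (∀ y' : Y, inducedY fY P y' = typePmf y y') ∧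
        r = (2 : ℝ) ^ ((N : ℝ) * condEntropy2 (inducedXY fX fY P))} := by
  classical
  have hl2 : (0:ℝ) < Real.log 2 := Real.log_pos one_lt_two
  set T : Set (Fin N → X) := {x : Fin N → X | ∃ P ∈ E,
      ∀ p : X × Y, inducedXY fX fY P p = typePmf (fun k => (x k, y k)) p} with hTdef
  set S : Set ℝ := {r : ℝ | ∃ P ∈ E, (∀ y' : Y, inducedY fY P y' = typePmf y y') ∧
      r = (2 : ℝ) ^ ((N : ℝ) * condEntropy2 (inducedXY fX fY P))} with hSdef
  -- every element of S is bounded by a fixed constant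
  have hub : ∀ r ∈ S, r ≤ (2:ℝ) ^ ((N:ℝ) * ((Fintype.card (X × Y) : ℝ) / Real.log 2)) := by
    rintro r ⟨P, hPE, -, rfl⟩
    apply Real.rpow_le_rpow_of_exponent_le one_le_two
    apply mul_le_mul_of_nonneg_left _ (Nat.cast_nonneg N)
    apply aux_condEntropy2_le
    · intro p
      unfold inducedXY
      exact Finset.sum_nonneg fun w _ => by split_ifs; exacts [(hEpmf P hPE).1 w, le_rfl]
    · intro b
      rw [← aux_inducedY_eq fX fY P b]
      have h0 : ∀ b', 0 ≤ inducedY fY P b' := by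
        intro b'
        unfold inducedY
        exact Finset.sum_nonneg fun w _ => by split_ifs; exacts [(hEpmf P hPE).1 w, le_rfl]
      have h1 : ∑ b', inducedY fY P b' = 1 := by
        unfold inducedY
        rw [Finset.sum_comm, ← (hEpmf P hPE).2]
        exact Finset.sum_congr rfl fun w _ => by simp
      calc inducedY fY P b ≤ ∑ b', inducedY fY P b' :=
            Finset.single_le_sum (fun b' _ => h0 b') (Finset.mem_univ b)
        _ = 1 := h1
  have hbdd : BddAbove S := ⟨_, fun r hr => hub r hr⟩
  rcases Set.eq_empty_or_nonempty T with hTe | ⟨x₀, hx₀⟩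
  · rw [hTe]
    simp only [Set.ncard_empty, Nat.cast_zero]
    exact Real.sSup_nonneg fun r hr => by
      rcases hr with ⟨P, -, -, rfl⟩
      positivity
  · have hTfin : T.Finite := Set.toFinite T
    set Tf : Finset (Fin N → X) := hTfin.toFinset with hTf
    have hmemT : ∀ x, x ∈ Tf ↔ x ∈ T := fun x => Set.Finite.mem_toFinset hTfin
    set n : ℕ := Tf.card with hn
    have hnpos : 0 < n := Finset.card_pos.mpr ⟨x₀, (hmemT x₀).mpr hx₀⟩
    have hninv : (0:ℝ) < (n:ℝ)⁻¹ := inv_pos.mpr (Nat.cast_pos.mpr hnpos)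
    have hNpos : (0:ℝ) < (N:ℝ) := by exact_mod_cast hN
    -- choose witnesses
    have hchoice : ∀ x ∈ Tf, ∃ P ∈ E,
        ∀ p : X × Y, inducedXY fX fY P p = typePmf (fun k => (x k, y k)) p := by
      intro x hx
      have := (hmemT x).mp hx
      rwa [hTdef, Set.mem_setOf_eq] at this
    choose! Pc hPcE hPcXY using hchoice
    set Pbar : W → ℝ := ∑ x ∈ Tf, (n:ℝ)⁻¹ • Pc x with hPbar
    have hw1 : ∑ _x ∈ Tf, (n:ℝ)⁻¹ = 1 := by
      rw [Finset.sum_const, nsmul_eq_mul, ← hn]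
      field_simp
    have hPbarE : Pbar ∈ E :=
      hEconvex.sum_mem (fun x _ => hninv.le) hw1 (fun x hx => hPcE x hx)
    have hPbarw : ∀ w, Pbar w = ∑ x ∈ Tf, (n:ℝ)⁻¹ * Pc x w := by
      intro w
      rw [hPbar]
      simp [Finset.sum_apply]
    have hτ0 : ∀ (x : Fin N → X) (p : X × Y), 0 ≤ typePmf (fun k => (x k, y k)) p :=
      fun x p => div_nonneg (Nat.cast_nonneg _) (Nat.cast_nonneg _)
    have hty0 : ∀ b, 0 ≤ typePmf y b :=
      fun b => div_nonneg (Nat.cast_nonneg _) (Nat.cast_nonneg _)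
    -- linearity of inducedXY
    have hRlin : ∀ p : X × Y,
        inducedXY fX fY Pbar p = ∑ x ∈ Tf, (n:ℝ)⁻¹ * typePmf (fun k => (x k, y k)) p := by
      intro p
      unfold inducedXY
      calc ∑ w, (if fX w = p.1 ∧ fY w = p.2 then Pbar w else 0)
          = ∑ w, ∑ x ∈ Tf, (if fX w = p.1 ∧ fY w = p.2 then (n:ℝ)⁻¹ * Pc x w else 0) := by
            refine Finset.sum_congr rfl fun w _ => ?_
            rw [hPbarw w]
            split_ifs with h
            · rfl
            · exact Finset.sum_const_zero.symm
        _ = ∑ x ∈ Tf, ∑ w, (if fX w = p.1 ∧ fY w = p.2 then (n:ℝ)⁻¹ * Pc x w else 0) :=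
            Finset.sum_comm
        _ = ∑ x ∈ Tf, (n:ℝ)⁻¹ * typePmf (fun k => (x k, y k)) p := by
            refine Finset.sum_congr rfl fun x hx => ?_
            rw [← hPcXY x hx p]
            unfold inducedXY
            rw [Finset.mul_sum]
            exact Finset.sum_congr rfl fun w _ => by split_ifs <;> simp
    have hR0 : ∀ p : X × Y, 0 ≤ inducedXY fX fY Pbar p := by
      intro p
      rw [hRlin p]
      exact Finset.sum_nonneg fun x _ => mul_nonneg hninv.le (hτ0 x p)
    have hRge : ∀ x ∈ Tf, ∀ p : X × Y,
        (n:ℝ)⁻¹ * typePmf (fun k => (x k, y k)) p ≤ inducedXY fX fY Pbar p := by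
      intro x hx p
      rw [hRlin p]
      exact Finset.single_le_sum (fun x' _ => mul_nonneg hninv.le (hτ0 x' p)) hx
    have hmarg : ∀ b, ∑ a, inducedXY fX fY Pbar (a, b) = typePmf y b := by
      intro b
      calc ∑ a, inducedXY fX fY Pbar (a, b)
          = ∑ a, ∑ x ∈ Tf, (n:ℝ)⁻¹ * typePmf (fun k => (x k, y k)) (a, b) :=
            Finset.sum_congr rfl fun a _ => hRlin (a, b)
        _ = ∑ x ∈ Tf, ∑ a, (n:ℝ)⁻¹ * typePmf (fun k => (x k, y k)) (a, b) := Finset.sum_comm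
        _ = ∑ x ∈ Tf, (n:ℝ)⁻¹ * typePmf y b := by
            refine Finset.sum_congr rfl fun x _ => ?_
            rw [← Finset.mul_sum, aux_type_marg x y b]
        _ = typePmf y b := by rw [← Finset.sum_mul, hw1, one_mul]
    have hmargY : ∀ b, inducedY fY Pbar b = typePmf y b := fun b => by
      rw [aux_inducedY_eq fX fY Pbar b, hmarg b]
    have hcolR : ∀ p : X × Y, inducedXY fX fY Pbar p ≤ typePmf y p.2 := by
      intro p
      rw [← hmarg p.2]
      exact Finset.single_le_sum (fun a _ => hR0 (a, p.2)) (Finset.mem_univ p.1)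
    have htpos : ∀ k, 0 < typePmf y (y k) := by
      intro k
      unfold typePmf
      apply div_pos _ hNpos
      have hk : k ∈ Finset.univ.filter (fun j => y j = y k) :=
        Finset.mem_filter.mpr ⟨Finset.mem_univ k, rfl⟩
      exact_mod_cast Finset.card_pos.mpr ⟨k, hk⟩
    set V : X × Y → ℝ := fun p => inducedXY fX fY Pbar p / typePmf y p.2 with hVdef
    have hV0 : ∀ p, 0 ≤ V p := fun p => div_nonneg (hR0 p) (hty0 p.2)
    have hVsum : ∀ k, ∑ a, V (a, y k) = 1 := by
      intro k
      simp only [hVdef]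
      rw [← Finset.sum_div, hmarg (y k), div_self (htpos k).ne']
    have htotal : ∑ x : Fin N → X, ∏ k, V (x k, y k) = 1 := by
      calc ∑ x : Fin N → X, ∏ k, V (x k, y k)
          = ∏ k, ∑ a, V (a, y k) :=
            (Fintype.prod_sum (κ := fun _ : Fin N => X) (f := fun k a => V (a, y k))).symm
        _ = ∏ _k : Fin N, (1:ℝ) := Finset.prod_congr rfl fun k _ => hVsum k
        _ = 1 := Finset.prod_const_one
    have hTsum : ∑ x ∈ Tf, ∏ k, V (x k, y k) ≤ 1 := by
      rw [← htotal]
      exact Finset.sum_le_sum_of_subset_of_nonneg (Finset.subset_univ Tf)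
        (fun x _ _ => Finset.prod_nonneg fun k _ => hV0 _)
    set c : (Fin N → X) → ℝ :=
      fun x => ∑ p : X × Y, typePmf (fun k => (x k, y k)) p * Real.logb 2 (V p) with hcdef
    have hVpos : ∀ x ∈ Tf, ∀ p : X × Y, 0 < typePmf (fun k => (x k, y k)) p → 0 < V p := by
      intro x hx p hτp
      have hRp : 0 < inducedXY fX fY Pbar p :=
        lt_of_lt_of_le (mul_pos hninv hτp) (hRge x hx p)
      exact div_pos hRp (lt_of_lt_of_le hRp (hcolR p))
    have hcnt : ∀ (x : Fin N → X) (p : X × Y),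
        ((Finset.univ.filter (fun k => (x k, y k) = p)).card : ℝ)
          = (N:ℝ) * typePmf (fun k => (x k, y k)) p := by
      intro x p
      simp only [typePmf]
      field_simp
    have hμ : ∀ x ∈ Tf, ∏ k, V (x k, y k) = (2:ℝ) ^ ((N:ℝ) * c x) := by
      intro x hx
      have h1 : ∏ k, V (x k, y k)
          = ∏ p : X × Y, V p ^ (Finset.univ.filter (fun k => (x k, y k) = p)).card := by
        rw [Finset.prod_comp V (fun k => (x k, y k))]
        refine Finset.prod_subset (Finset.subset_univ _) ?_
        intro p _ hp
        have hc0 : (Finset.univ.filter (fun k => (x k, y k) = p)).card = 0 := by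
          rw [Finset.card_eq_zero, Finset.filter_eq_empty_iff]
          intro k _ hk
          exact hp (Finset.mem_image.mpr ⟨k, Finset.mem_univ k, hk⟩)
        rw [hc0, pow_zero]
      have h2 : ∀ p : X × Y, V p ^ (Finset.univ.filter (fun k => (x k, y k) = p)).card
          = (2:ℝ) ^ (((Finset.univ.filter (fun k => (x k, y k) = p)).card : ℝ)
              * Real.logb 2 (V p)) := by
        intro p
        rcases Nat.eq_zero_or_pos (Finset.univ.filter (fun k => (x k, y k) = p)).card with h0 | hpos
        · rw [h0]; simp
        · have hτp : 0 < typePmf (fun k => (x k, y k)) p := by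
            unfold typePmf
            apply div_pos _ hNpos
            exact_mod_cast hpos
          have hVp : 0 < V p := hVpos x hx p hτp
          symm
          rw [mul_comm, Real.rpow_mul (by norm_num : (0:ℝ) ≤ 2), Real.rpow_natCast,
            Real.rpow_logb (by norm_num : (0:ℝ) < 2) (by norm_num : (2:ℝ) ≠ 1) hVp]
      have h3 : ∑ p : X × Y, ((Finset.univ.filter (fun k => (x k, y k) = p)).card : ℝ)
          * Real.logb 2 (V p) = (N:ℝ) * c x := by
        simp only [hcdef]
        rw [Finset.mul_sum]
        refine Finset.sum_congr rfl fun p _ => ?_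
        rw [hcnt x p]
        ring
      calc ∏ k, V (x k, y k)
          = ∏ p : X × Y, V p ^ (Finset.univ.filter (fun k => (x k, y k) = p)).card := h1
        _ = ∏ p : X × Y, (2:ℝ) ^ (((Finset.univ.filter (fun k => (x k, y k) = p)).card : ℝ)
              * Real.logb 2 (V p)) := Finset.prod_congr rfl fun p _ => h2 p
        _ = (2:ℝ) ^ (∑ p : X × Y, ((Finset.univ.filter (fun k => (x k, y k) = p)).card : ℝ)
              * Real.logb 2 (V p)) := aux_prod_rpow _
        _ = (2:ℝ) ^ ((N:ℝ) * c x) := by rw [h3]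
    have hH : condEntropy2 (inducedXY fX fY Pbar)
        = -∑ p : X × Y, inducedXY fX fY Pbar p * Real.logb 2 (V p) := by
      unfold condEntropy2
      congr 1
      refine Finset.sum_congr rfl fun p _ => ?_
      split_ifs with h
      · simp only [hVdef]
        rw [hmarg p.2]
      · have hz : inducedXY fX fY Pbar p = 0 := le_antisymm (not_lt.mp h) (hR0 p)
        rw [hz, zero_mul]
    have hmean : ∑ x ∈ Tf, (n:ℝ)⁻¹ * ((N:ℝ) * c x)
        = (N:ℝ) * ∑ p : X × Y, inducedXY fX fY Pbar p * Real.logb 2 (V p) := by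
      simp only [hcdef, hRlin, Finset.mul_sum, Finset.sum_mul]
      rw [Finset.sum_comm]
      exact Finset.sum_congr rfl fun p _ => Finset.sum_congr rfl fun x _ => by ring
    have hJ := aux_two_rpow_convex.map_sum_le (t := Tf) (w := fun _ => (n:ℝ)⁻¹)
      (p := fun x => (N:ℝ) * c x) (fun x _ => hninv.le) hw1 (fun x _ => Set.mem_univ _)
    simp only [smul_eq_mul] at hJ
    have hchain : (2:ℝ) ^ (-((N:ℝ) * condEntropy2 (inducedXY fX fY Pbar))) ≤ (n:ℝ)⁻¹ := by
      have e1 : ∑ x ∈ Tf, (n:ℝ)⁻¹ * ((N:ℝ) * c x)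
          = -((N:ℝ) * condEntropy2 (inducedXY fX fY Pbar)) := by
        rw [hmean, hH]
        ring
      calc (2:ℝ) ^ (-((N:ℝ) * condEntropy2 (inducedXY fX fY Pbar)))
          = (2:ℝ) ^ (∑ x ∈ Tf, (n:ℝ)⁻¹ * ((N:ℝ) * c x)) := by rw [e1]
        _ ≤ ∑ x ∈ Tf, (n:ℝ)⁻¹ * (2:ℝ) ^ ((N:ℝ) * c x) := hJ
        _ = (n:ℝ)⁻¹ * ∑ x ∈ Tf, (2:ℝ) ^ ((N:ℝ) * c x) := (Finset.mul_sum _ _ _).symm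
        _ = (n:ℝ)⁻¹ * ∑ x ∈ Tf, ∏ k, V (x k, y k) := by
            rw [Finset.sum_congr rfl (fun x hx => (hμ x hx).symm)]
        _ ≤ (n:ℝ)⁻¹ * 1 := mul_le_mul_of_nonneg_left hTsum hninv.le
        _ = (n:ℝ)⁻¹ := mul_one _
    have hfin : (n:ℝ) ≤ (2:ℝ) ^ ((N:ℝ) * condEntropy2 (inducedXY fX fY Pbar)) := by
      have hA : (0:ℝ) < (2:ℝ) ^ ((N:ℝ) * condEntropy2 (inducedXY fX fY Pbar)) :=
        Real.rpow_pos_of_pos (by norm_num) _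
      rw [Real.rpow_neg (by norm_num : (0:ℝ) ≤ 2)] at hchain
      exact (inv_le_inv₀ hA (Nat.cast_pos.mpr hnpos)).mp hchain
    have hncard : T.ncard = n := Set.ncard_eq_toFinset_card T hTfin
    calc ((T.ncard : ℕ) : ℝ) = (n:ℝ) := by rw [hncard]
      _ ≤ (2:ℝ) ^ ((N:ℝ) * condEntropy2 (inducedXY fX fY Pbar)) := hfin
      _ ≤ sSup S := le_csSup hbdd ⟨Pbar, hPbarE, hmargY, rfl⟩
end

section
/- Let ν = (ν_0,…,ν_L) be nonnegative reals with ν_M = 0 for all M < L·p_src, and let 𝒬 = { Q pmf on ℳ : ∑_M Q(M)ν_M ≥ ∑_M 𝔟_{L,p_src}(M)ν_M + δ₁ }. Suppose η₁ ≥ 0 and δ₁ ≥ 0 satisfy sup_{Q ∈ 𝒬} 2^{−N_em·D(Q‖𝔟_{L,p_src})} ≤ η₁. If the random variables (v, N, m^N, u^N, x^N) satisfy: (a) v = (v_0,…,v_L) is multinomially distributed with N_em trials and per-trial distribution 𝔟_{L,p_odd} for some p_odd ≤ p_src, i.e. Pr(v) = (N_em!/∏_M v_M!)·∏_M 𝔟_{L,p_odd}(M)^{v_M},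 and (b) almost surely on the event {N ≥ 1}, N·P̃_{m^N}(M) ≤ v_M for every M ∈ ℳ, then Pr( N ≥ 1 and ∑_M P̃_{m^N}(M)·ν_M > (N_em/N)·(∑_M 𝔟_{L,p_src}(M)·ν_M + δ₁) ) ≤ η₁. -/
/-!
Off a null set, `N·P̃_{m^N} ≤ v` turns the bad event into `∑_M v_M ν_M > N_em t` with
`t = E_{𝔟_{L,p_src}}[ν] + δ₁`, an event about the multinomial count vector `v` alone. Its
probability is at most the Chernoff bound `Z(l)^{N_em} 2^{-l N_em t}` for every `l ≥ 0`, where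
`Z(l) = ∑_M 𝔟_{L,p}(M) 2^{l ν_M}`. Replacing `p_odd` by `p_src` only increases `Z`: `ν` vanishes
below `L p_src`, and above it `𝔟_{L,p}(M)` is nondecreasing in `p ≤ p_src`. Finally choose `l` so
that the tilted pmf `Q_l ∝ 𝔟_{L,p_src} 2^{l ν}` has mean exactly `t`; then `Q_l ∈ 𝒬` and the
Chernoff bound equals `2^{-N_em D(Q_l ‖ 𝔟_{L,p_src})} ≤ η₁`.
-/

open MeasureTheory Finset

/-- The binomial pmf with `L` trials and success probability `p`. -/
noncomputable def binomPmf (L : ℕ) (p : ℝ) (M : ℕ) : ℝ :=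
  (Nat.choose L M : ℝ) * p ^ M * (1 - p) ^ (L - M)

/-- The type (empirical distribution) of the first `n` entries of a sequence `s : ℕ → α`. -/
noncomputable def seqType {α : Type*} [DecidableEq α] (n : ℕ) (s : ℕ → α) (a : α) : ℝ :=
  (((Finset.range n).filter (fun k => s k = a)).card : ℝ) / (n : ℝ)

open Real

lemma binomPmf_nonneg {L : ℕ} {p : ℝ} (hp0 : 0 ≤ p) (hp1 : p ≤ 1) (M : ℕ) :
    0 ≤ binomPmf L p M := by
  have : 0 ≤ 1 - p := by linarith
  unfold binomPmf
  positivity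

lemma sum_binomPmf (L : ℕ) (p : ℝ) : ∑ M ∈ range (L + 1), binomPmf L p M = 1 := by
  have h := add_pow p (1 - p) L
  rw [add_sub_cancel, one_pow] at h
  rw [h]
  exact sum_congr rfl fun M _ => by unfold binomPmf; ring

lemma one_sub_pow_mul_one_add_pow_le_one {x y : ℝ} {m k : ℕ} (hx : x ≤ 1) (hy : -1 ≤ y)
    (h : k * y ≤ m * x) : (1 - x) ^ m * (1 + y) ^ k ≤ 1 :=
  calc (1 - x) ^ m * (1 + y) ^ k ≤ exp (-x) ^ m * exp y ^ k := by
        have := add_one_le_exp (-x)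
        have := add_one_le_exp y
        have : 0 ≤ 1 + y := by linarith
        gcongr <;> linarith
    _ = exp (k * y - m * x) := by rw [← exp_nat_mul, ← exp_nat_mul, ← exp_add]; ring_nf
    _ ≤ 1 := exp_le_one_iff.mpr (by linarith)

lemma pow_mul_one_sub_pow_le {p q : ℝ} {L M : ℕ} (hp0 : 0 ≤ p) (hpq : p ≤ q) (hq1 : q ≤ 1)
    (hM : L * q ≤ M) (hML : M ≤ L) :
    p ^ M * (1 - p) ^ (L - M) ≤ q ^ M * (1 - q) ^ (L - M) := by
  rcases hpq.eq_or_lt with rfl | hpq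
  · rfl
  rcases hq1.eq_or_lt with rfl | hq1
  · obtain rfl : M = L := le_antisymm hML (by exact_mod_cast (by linarith : (L : ℝ) ≤ M))
    simpa using pow_le_pow_left₀ hp0 hpq.le M
  have hq0 : 0 < q := hp0.trans_lt hpq
  have h1q : 0 < 1 - q := by linarith
  obtain ⟨x, hx⟩ : ∃ x, x = (q - p) / q := ⟨_, rfl⟩
  obtain ⟨y, hy⟩ : ∃ y, y = (q - p) / (1 - q) := ⟨_, rfl⟩
  have hpx : p = q * (1 - x) := by rw [hx]; field_simp; ring
  have hpy : 1 - p = (1 - q) * (1 + y) := by rw [hy]; field_simp; ring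
  have hxy : ((L - M : ℕ) : ℝ) * y ≤ M * x := by
    rw [hx, hy, Nat.cast_sub hML, mul_div_assoc', mul_div_assoc', div_le_div_iff₀ h1q hq0]
    nlinarith [mul_le_mul_of_nonneg_left hM (sub_nonneg.mpr hpq.le)]
  have hx1 : x ≤ 1 := by
    rw [hx, sub_div, div_self hq0.ne']
    linarith [div_nonneg hp0 hq0.le]
  have hy1 : -1 ≤ y := by
    rw [hy]
    linarith [div_nonneg (sub_nonneg.mpr hpq.le) h1q.le]
  calc p ^ M * (1 - p) ^ (L - M)
      = q ^ M * (1 - q) ^ (L - M) * ((1 - x) ^ M * (1 + y) ^ (L - M)) := by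
        rw [hpy, hpx, mul_pow, mul_pow]; ring
    _ ≤ q ^ M * (1 - q) ^ (L - M) :=
        mul_le_of_le_one_right (by positivity) (one_sub_pow_mul_one_add_pow_le_one hx1 hy1 hxy)

lemma binomPmf_le_binomPmf {p q : ℝ} {L M : ℕ} (hp0 : 0 ≤ p) (hpq : p ≤ q) (hq1 : q ≤ 1)
    (hM : L * q ≤ M) : binomPmf L p M ≤ binomPmf L q M := by
  unfold binomPmf
  rcases le_or_gt M L with hML | hLM
  · rw [mul_assoc, mul_assoc]
    exact mul_le_mul_of_nonneg_left (pow_mul_one_sub_pow_le hp0 hpq hq1 hM hML) (by positivity)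
  · simp [Nat.choose_eq_zero_of_lt hLM]

noncomputable def klDivBase2 {ι : Type*} (s : Finset ι) (Q P : ι → ℝ) : ℝ :=
  ∑ i ∈ s, if 0 < Q i then Q i * logb 2 (Q i / P i) else 0

section Tilting

variable {ι : Type*} (s : Finset ι) (P ν : ι → ℝ)

noncomputable def partitionFn (l : ℝ) : ℝ :=
  ∑ i ∈ s, P i * (2 : ℝ) ^ (l * ν i)

noncomputable def tilt [DecidableEq ι] (l : ℝ) (i : ι) : ℝ :=
  if i ∈ s then P i * (2 : ℝ) ^ (l * ν i) / partitionFn s P ν l else 0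

variable {s P ν}

lemma partitionFn_nonneg (hP : ∀ i ∈ s, 0 ≤ P i) (l : ℝ) : 0 ≤ partitionFn s P ν l :=
  sum_nonneg fun i hi => mul_nonneg (hP i hi) (by positivity)

lemma partitionFn_pos (hP : ∀ i ∈ s, 0 ≤ P i) (h : ∃ i ∈ s, 0 < P i) (l : ℝ) :
    0 < partitionFn s P ν l := by
  obtain ⟨i₀, hi₀, hPi₀⟩ := h
  exact sum_pos' (fun i hi => mul_nonneg (hP i hi) (by positivity)) ⟨i₀, hi₀, by positivity⟩

-- For large `l` the atom `i₀` dominates: each summand is at least `-P i t 2^{l t}`, while the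
-- `i₀`-summand is `P i₀ (ν i₀ - t) 2^{l ν i₀}`.
lemma exists_sum_mul_rpow_mul_sub_nonneg (hP : ∀ i ∈ s, 0 ≤ P i) (hν : ∀ i ∈ s, 0 ≤ ν i)
    {t : ℝ} (ht : 0 ≤ t) {i₀ : ι} (hi₀ : i₀ ∈ s) (hPi₀ : 0 < P i₀) (hti₀ : t < ν i₀) :
    ∃ l, 0 ≤ l ∧ 0 ≤ ∑ i ∈ s, P i * (2 : ℝ) ^ (l * ν i) * (ν i - t) := by
  have hc : 0 < ν i₀ - t := sub_pos.mpr hti₀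
  have hgrowth : Filter.Tendsto (fun l : ℝ => P i₀ * (ν i₀ - t) * (2 : ℝ) ^ (l * (ν i₀ - t)))
      Filter.atTop Filter.atTop :=
    ((tendsto_rpow_atTop_of_base_gt_one 2 one_lt_two).comp
      (Filter.tendsto_id.atTop_mul_const hc)).const_mul_atTop (mul_pos hPi₀ hc)
  obtain ⟨l, hlarge, hl⟩ :=
    ((hgrowth.eventually_ge_atTop ((∑ i ∈ s, P i) * t)).and (Filter.eventually_ge_atTop 0)).exists
  refine ⟨l, hl, ?_⟩
  have hterm : ∀ i ∈ s, 0 ≤ P i * ((2 : ℝ) ^ (l * ν i) * (ν i - t) + t * (2 : ℝ) ^ (l * t)) := by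
    intro i hi
    refine mul_nonneg (hP i hi) ?_
    rcases le_or_gt t (ν i) with hti | hti
    · have := sub_nonneg.mpr hti
      positivity
    · have hpow : (2 : ℝ) ^ (l * ν i) ≤ (2 : ℝ) ^ (l * t) :=
        rpow_le_rpow_of_exponent_le one_le_two (mul_le_mul_of_nonneg_left hti.le hl)
      have := hν i hi
      nlinarith [rpow_pos_of_pos two_pos (l * ν i)]
  have hsplit : (2 : ℝ) ^ (l * ν i₀) = (2 : ℝ) ^ (l * (ν i₀ - t)) * (2 : ℝ) ^ (l * t) := by
    rw [← rpow_add two_pos]; ring_nf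
  calc (0 : ℝ) ≤ (2 : ℝ) ^ (l * t) * (P i₀ * (ν i₀ - t) * (2 : ℝ) ^ (l * (ν i₀ - t))
          - (∑ i ∈ s, P i) * t) := mul_nonneg (by positivity) (sub_nonneg.mpr hlarge)
    _ ≤ P i₀ * ((2 : ℝ) ^ (l * ν i₀) * (ν i₀ - t) + t * (2 : ℝ) ^ (l * t))
          - (∑ i ∈ s, P i) * t * (2 : ℝ) ^ (l * t) := by
        rw [hsplit]
        nlinarith [mul_nonneg (mul_nonneg hPi₀.le ht) (rpow_pos_of_pos two_pos (l * t)).le]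
    _ ≤ ∑ i ∈ s, P i * ((2 : ℝ) ^ (l * ν i) * (ν i - t) + t * (2 : ℝ) ^ (l * t))
          - (∑ i ∈ s, P i) * t * (2 : ℝ) ^ (l * t) := by
        gcongr
        exact single_le_sum hterm hi₀
    _ = ∑ i ∈ s, P i * (2 : ℝ) ^ (l * ν i) * (ν i - t) := by
        rw [sum_mul, sum_mul, ← sum_sub_distrib]
        exact sum_congr rfl fun i _ => by ring

lemma partitionFn_le_partitionFn {P' : ι → ℝ} (hsum : ∑ i ∈ s, P' i ≤ ∑ i ∈ s, P i)
    (hν : ∀ i ∈ s, 0 ≤ ν i) (hdom : ∀ i ∈ s, ν i ≠ 0 → P' i ≤ P i) {l : ℝ} (hl : 0 ≤ l) :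
    partitionFn s P' ν l ≤ partitionFn s P ν l := by
  have hsplit : ∀ R : ι → ℝ, partitionFn s R ν l =
      ∑ i ∈ s, R i + ∑ i ∈ s, R i * ((2 : ℝ) ^ (l * ν i) - 1) := by
    intro R
    rw [partitionFn, ← sum_add_distrib]
    exact sum_congr rfl fun i _ => by ring
  rw [hsplit, hsplit]
  refine add_le_add hsum (sum_le_sum fun i hi => ?_)
  by_cases hνi : ν i = 0
  · simp [hνi]
  · exact mul_le_mul_of_nonneg_right (hdom i hi hνi)
      (sub_nonneg.mpr (one_le_rpow one_le_two (mul_nonneg hl (hν i hi))))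

lemma prod_mul_two_rpow_pow (k : ι → ℕ) (l : ℝ) :
    ∏ i ∈ s, (P i * (2 : ℝ) ^ (l * ν i)) ^ k i =
      (∏ i ∈ s, P i ^ k i) * (2 : ℝ) ^ (l * ∑ i ∈ s, (k i : ℝ) * ν i) := by
  rw [mul_sum, rpow_sum_of_pos two_pos, ← prod_mul_distrib]
  refine prod_congr rfl fun i _ => ?_
  rw [mul_pow, ← rpow_mul_natCast zero_le_two]
  ring_nf

variable [DecidableEq ι]

lemma tilt_nonneg (hP : ∀ i ∈ s, 0 ≤ P i) (l : ℝ) (i : ι) : 0 ≤ tilt s P ν l i := by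
  unfold tilt
  split_ifs with hi
  · have := hP i hi
    have := partitionFn_nonneg (ν := ν) hP l
    positivity
  · rfl

lemma tilt_of_notMem {i : ι} (hi : i ∉ s) (l : ℝ) : tilt s P ν l i = 0 := if_neg hi

lemma sum_tilt_mul (l : ℝ) (f : ι → ℝ) :
    ∑ i ∈ s, tilt s P ν l i * f i =
      (∑ i ∈ s, P i * (2 : ℝ) ^ (l * ν i) * f i) / partitionFn s P ν l := by
  rw [sum_div]
  exact sum_congr rfl fun i hi => by rw [tilt, if_pos hi]; ring

lemma sum_tilt {l : ℝ} (hZ : 0 < partitionFn s P ν l) : ∑ i ∈ s, tilt s P ν l i = 1 := by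
  have h := sum_tilt_mul (s := s) (P := P) (ν := ν) l 1
  simp only [Pi.one_apply, mul_one] at h
  exact h.trans (div_self hZ.ne')

lemma exists_sum_tilt_mul_eq (hP : ∀ i ∈ s, 0 ≤ P i) (hν : ∀ i ∈ s, 0 ≤ ν i)
    (hPsum : ∑ i ∈ s, P i = 1) {t : ℝ} (hmean : ∑ i ∈ s, P i * ν i ≤ t) {i₀ : ι} (hi₀ : i₀ ∈ s)
    (hPi₀ : 0 < P i₀) (hti₀ : t < ν i₀) :
    ∃ l, 0 ≤ l ∧ ∑ i ∈ s, tilt s P ν l i * ν i = t := by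
  set g : ℝ → ℝ := fun l => ∑ i ∈ s, P i * (2 : ℝ) ^ (l * ν i) * (ν i - t)
  have hg : ∀ l, g l = ∑ i ∈ s, P i * (2 : ℝ) ^ (l * ν i) * ν i - t * partitionFn s P ν l := by
    intro l
    rw [partitionFn, mul_sum, ← sum_sub_distrib]
    exact sum_congr rfl fun i _ => by ring
  have hg0 : g 0 ≤ 0 := by
    have : g 0 = ∑ i ∈ s, P i * ν i - t * ∑ i ∈ s, P i := by
      rw [hg, partitionFn]; simp
    rw [this, hPsum]; linarith
  have ht : 0 ≤ t := (sum_nonneg fun i hi => mul_nonneg (hP i hi) (hν i hi)).trans hmean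
  obtain ⟨Λ, hΛ, hgΛ⟩ := exists_sum_mul_rpow_mul_sub_nonneg hP hν ht hi₀ hPi₀ hti₀
  have hgc : Continuous g := by fun_prop (disch := norm_num)
  obtain ⟨l, hl, hgl⟩ := intermediate_value_Icc hΛ hgc.continuousOn ⟨hg0, hgΛ⟩
  have hZ := partitionFn_pos (ν := ν) hP ⟨i₀, hi₀, hPi₀⟩ l
  refine ⟨l, hl.1, ?_⟩
  rw [sum_tilt_mul, div_eq_iff hZ.ne']
  linarith [hg l]

lemma pos_of_tilt_pos (hP : ∀ i ∈ s, 0 ≤ P i) {l : ℝ} {i : ι} (hi : i ∈ s)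
    (h : 0 < tilt s P ν l i) : 0 < P i := by
  refine (hP i hi).lt_of_ne fun hPi => h.ne' ?_
  rw [tilt, if_pos hi, ← hPi, zero_mul, zero_div]

lemma klDivBase2_tilt (hP : ∀ i ∈ s, 0 ≤ P i) {l : ℝ} (hZ : 0 < partitionFn s P ν l) :
    klDivBase2 s (tilt s P ν l) P =
      l * ∑ i ∈ s, tilt s P ν l i * ν i - logb 2 (partitionFn s P ν l) := by
  have hterm : ∀ i ∈ s, (if 0 < tilt s P ν l i then
      tilt s P ν l i * logb 2 (tilt s P ν l i / P i) else 0) =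
        tilt s P ν l i * (l * ν i - logb 2 (partitionFn s P ν l)) := by
    intro i hi
    split_ifs with htilt
    · have hPi := pos_of_tilt_pos hP hi htilt
      have : tilt s P ν l i / P i = (2 : ℝ) ^ (l * ν i) / partitionFn s P ν l := by
        rw [tilt, if_pos hi]; field_simp
      rw [this, logb_div (by positivity) hZ.ne', logb_rpow two_pos (by norm_num)]
    · rw [le_antisymm (not_lt.mp htilt) (tilt_nonneg hP l i), zero_mul]
  rw [klDivBase2, sum_congr rfl hterm, mul_sum]
  simp only [mul_sub, sum_sub_distrib, ← sum_mul, sum_tilt hZ, one_mul]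
  congr 1
  exact sum_congr rfl fun i _ => by ring

end Tilting

section Multinomial

variable {ι : Type*} [DecidableEq ι] {s : Finset ι} {P ν : ι → ℝ} {n : ℕ} {t : ℝ}

noncomputable def multinomialTail (s : Finset ι) (n : ℕ) (P ν : ι → ℝ) (t : ℝ) : ℝ :=
  ∑ k ∈ (piAntidiag s n).filter (fun k => n * t < ∑ i ∈ s, (k i : ℝ) * ν i),
    (Nat.multinomial s k : ℝ) * ∏ i ∈ s, P i ^ k i

lemma multinomialTail_le_partitionFn (hP : ∀ i ∈ s, 0 ≤ P i) {l : ℝ} (hl : 0 ≤ l) :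
    multinomialTail s n P ν t ≤ partitionFn s P ν l ^ n * (2 : ℝ) ^ (-(l * (n * t))) := by
  have hnonneg : ∀ k, 0 ≤ (Nat.multinomial s k : ℝ) * ∏ i ∈ s, (P i * (2 : ℝ) ^ (l * ν i)) ^ k i :=
    fun k => mul_nonneg (Nat.cast_nonneg _)
      (prod_nonneg fun i hi => pow_nonneg (mul_nonneg (hP i hi) (by positivity)) _)
  have hterm : ∀ k ∈ (piAntidiag s n).filter (fun k => n * t < ∑ i ∈ s, (k i : ℝ) * ν i),
      (Nat.multinomial s k : ℝ) * ∏ i ∈ s, P i ^ k i ≤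
        (Nat.multinomial s k : ℝ) * (∏ i ∈ s, (P i * (2 : ℝ) ^ (l * ν i)) ^ k i) *
          (2 : ℝ) ^ (-(l * (n * t))) := by
    intro k hk
    have hexp : 1 ≤ (2 : ℝ) ^ (l * ∑ i ∈ s, (k i : ℝ) * ν i) * (2 : ℝ) ^ (-(l * (n * t))) := by
      rw [← rpow_add two_pos]
      refine one_le_rpow one_le_two ?_
      nlinarith [(mem_filter.mp hk).2]
    rw [prod_mul_two_rpow_pow]
    calc (Nat.multinomial s k : ℝ) * ∏ i ∈ s, P i ^ k i
        ≤ (Nat.multinomial s k : ℝ) * (∏ i ∈ s, P i ^ k i) *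
            ((2 : ℝ) ^ (l * ∑ i ∈ s, (k i : ℝ) * ν i) * (2 : ℝ) ^ (-(l * (n * t)))) :=
          le_mul_of_one_le_right (mul_nonneg (Nat.cast_nonneg _)
            (prod_nonneg fun i hi => pow_nonneg (hP i hi) _)) hexp
      _ = _ := by ring
  calc multinomialTail s n P ν t
      ≤ ∑ k ∈ (piAntidiag s n).filter (fun k => n * t < ∑ i ∈ s, (k i : ℝ) * ν i),
          (Nat.multinomial s k : ℝ) * (∏ i ∈ s, (P i * (2 : ℝ) ^ (l * ν i)) ^ k i) *
            (2 : ℝ) ^ (-(l * (n * t))) := sum_le_sum hterm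
    _ ≤ ∑ k ∈ piAntidiag s n,
          (Nat.multinomial s k : ℝ) * (∏ i ∈ s, (P i * (2 : ℝ) ^ (l * ν i)) ^ k i) *
            (2 : ℝ) ^ (-(l * (n * t))) :=
        sum_le_sum_of_subset_of_nonneg (filter_subset _ _)
          fun k _ _ => mul_nonneg (hnonneg k) (by positivity)
    _ = partitionFn s P ν l ^ n * (2 : ℝ) ^ (-(l * (n * t))) := by
        rw [← sum_mul, partitionFn, sum_pow_eq_sum_piAntidiag]

lemma exists_ne_zero_lt_of_multinomialTail_ne_zero (h : multinomialTail s n P ν t ≠ 0) :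
    ∃ i ∈ s, P i ≠ 0 ∧ t < ν i := by
  obtain ⟨k, hk, hk0⟩ := exists_ne_zero_of_sum_ne_zero h
  rw [mem_filter, mem_piAntidiag] at hk
  obtain ⟨⟨hksum, -⟩, hlt⟩ := hk
  have : ∑ i ∈ s, (k i : ℝ) * t < ∑ i ∈ s, (k i : ℝ) * ν i := by
    rwa [← sum_mul, ← Nat.cast_sum, hksum]
  obtain ⟨i, hi, hlt⟩ := exists_lt_of_sum_lt this
  have hki : k i ≠ 0 := by
    rintro hki
    simp [hki] at hlt
  refine ⟨i, hi, fun hPi => hk0 ?_, lt_of_mul_lt_mul_left hlt (Nat.cast_nonneg _)⟩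
  rw [prod_eq_zero hi (by rw [hPi, zero_pow hki]), mul_zero]

end Multinomial

lemma multinomialTail_le_of_klDivBase2_le {ι : Type*} [DecidableEq ι] {s : Finset ι}
    {P P' ν : ι → ℝ} {n : ℕ} {t η : ℝ} (hP : ∀ i ∈ s, 0 ≤ P i) (hPsum : ∑ i ∈ s, P i = 1)
    (hP' : ∀ i ∈ s, 0 ≤ P' i) (hP'sum : ∑ i ∈ s, P' i = 1) (hν : ∀ i ∈ s, 0 ≤ ν i)
    (hdom : ∀ i ∈ s, ν i ≠ 0 → P' i ≤ P i) (hmean : ∑ i ∈ s, P i * ν i ≤ t) (hη : 0 ≤ η)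
    (hKL : ∀ Q : ι → ℝ, (∀ i, 0 ≤ Q i) → (∀ i, i ∉ s → Q i = 0) → ∑ i ∈ s, Q i = 1 →
      t ≤ ∑ i ∈ s, Q i * ν i → (∀ i ∈ s, 0 < Q i → 0 < P i) →
      (2 : ℝ) ^ (-(n : ℝ) * klDivBase2 s Q P) ≤ η) :
    multinomialTail s n P' ν t ≤ η := by
  by_cases h0 : multinomialTail s n P' ν t = 0
  · exact h0.le.trans hη
  -- The tilt needs an atom of `P` above `t`; a nonzero tail provides one of `P'`, and `hdom`
  -- makes it an atom of `P`.
  obtain ⟨i₀, hi₀, hP'i₀, hti₀⟩ := exists_ne_zero_lt_of_multinomialTail_ne_zero h0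
  have ht : 0 ≤ t := (sum_nonneg fun i hi => mul_nonneg (hP i hi) (hν i hi)).trans hmean
  have hPi₀ : 0 < P i₀ :=
    ((hP' i₀ hi₀).lt_of_ne' hP'i₀).trans_le (hdom i₀ hi₀ (ht.trans_lt hti₀).ne')
  obtain ⟨l, hl, hmean_l⟩ := exists_sum_tilt_mul_eq hP hν hPsum hmean hi₀ hPi₀ hti₀
  have hZ := partitionFn_pos (ν := ν) hP ⟨i₀, hi₀, hPi₀⟩ l
  calc multinomialTail s n P' ν t
      ≤ partitionFn s P' ν l ^ n * (2 : ℝ) ^ (-(l * (n * t))) :=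
        multinomialTail_le_partitionFn hP' hl
    _ ≤ partitionFn s P ν l ^ n * (2 : ℝ) ^ (-(l * (n * t))) := by
        have := partitionFn_nonneg (ν := ν) hP' l
        gcongr
        exact partitionFn_le_partitionFn (hP'sum.trans hPsum.symm).le hν hdom hl
    _ = (2 : ℝ) ^ (-(n : ℝ) * klDivBase2 s (tilt s P ν l) P) := by
        rw [klDivBase2_tilt hP hZ, hmean_l, ← rpow_logb two_pos (by norm_num) hZ,
          ← rpow_mul_natCast zero_le_two, ← rpow_add two_pos, logb_rpow two_pos (by norm_num)]
        ring_nf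
    _ ≤ η := hKL _ (tilt_nonneg hP l) (fun i hi => tilt_of_notMem hi l) (sum_tilt hZ)
        hmean_l.ge fun i hi => pos_of_tilt_pos hP hi

lemma sum_seqType_mul {α : Type*} [DecidableEq α] (s : Finset α) (n : ℕ) (x : ℕ → α)
    (ν : α → ℝ) :
    ∑ a ∈ s, seqType n x a * ν a =
      (∑ a ∈ s, (((range n).filter fun k => x k = a).card : ℝ) * ν a) / n := by
  rw [sum_div]
  exact sum_congr rfl fun a _ => by rw [seqType]; ring

lemma lt_sum_mul_of_lt_sum_seqType_mul {α : Type*} [DecidableEq α] {s : Finset α} {n : ℕ}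
    {x : ℕ → α} {k : α → ℕ} {ν : α → ℝ} {c t : ℝ} (hn : 1 ≤ n) (hν : ∀ a ∈ s, 0 ≤ ν a)
    (hk : ∀ a, ((range n).filter fun j => x j = a).card ≤ k a)
    (h : c / n * t < ∑ a ∈ s, seqType n x a * ν a) :
    c * t < ∑ a ∈ s, (k a : ℝ) * ν a := by
  have hnpos : (0 : ℝ) < n := by exact_mod_cast hn
  rw [sum_seqType_mul, div_mul_eq_mul_div, div_lt_div_iff_of_pos_right hnpos] at h
  exact h.trans_le (sum_le_sum fun a ha =>
    mul_le_mul_of_nonneg_right (by exact_mod_cast hk a) (hν a ha))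

lemma measureReal_le_sum_measureReal_preimage {Ω β : Type*} [MeasurableSpace Ω]
    {μ : Measure Ω} [IsFiniteMeasure μ] {f : Ω → β} {F : Finset β} {A Z : Set Ω}
    (hZ : μ Z = 0) (hA : A ⊆ Z ∪ f ⁻¹' F) :
    μ.real A ≤ ∑ b ∈ F, μ.real (f ⁻¹' {b}) :=
  calc μ.real A ≤ μ.real (Z ∪ ⋃ b ∈ F, f ⁻¹' {b}) := by
        rw [set_biUnion_preimage_singleton]; exact measureReal_mono hA
    _ ≤ μ.real Z + μ.real (⋃ b ∈ F, f ⁻¹' {b}) := measureReal_union_le _ _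
    _ ≤ ∑ b ∈ F, μ.real (f ⁻¹' {b}) := by
        rw [measureReal_def, hZ, ENNReal.toReal_zero, zero_add]
        exact measureReal_biUnion_finset_le F _

theorem stmt_1_general (L : ℕ) (N_em : ℕ)
    (p_src : ℝ) (hpsrc0 : 0 ≤ p_src) (hpsrc1 : p_src ≤ 1)
    (ν : ℕ → ℝ) (hν0 : ∀ M : ℕ, M ≤ L → 0 ≤ ν M)
    (hνzero : ∀ M : ℕ, (M : ℝ) < (L : ℝ) * p_src → ν M = 0)
    (η₁ δ₁ : ℝ) (hη₁ : 0 ≤ η₁) (hδ₁ : 0 ≤ δ₁)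
    -- `sup_{Q ∈ 𝒬} 2^{−N_em·D(Q‖𝔟_{L,p_src})} ≤ η₁` (a `Q ∈ 𝒬` whose support is not
    -- contained in that of `𝔟_{L,p_src}` has `D = +∞`, hence `2^{−N_em·D} = 0 ≤ η₁`)
    (hKL : ∀ Q : ℕ → ℝ, (∀ M, 0 ≤ Q M) → (∀ M, M ∉ Finset.range (L + 1) → Q M = 0) →
      (∑ M ∈ Finset.range (L + 1), Q M = 1) →
      (∑ M ∈ Finset.range (L + 1), Q M * ν M ≥
        ∑ M ∈ Finset.range (L + 1), binomPmf L p_src M * ν M + δ₁) →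
      (∀ M ∈ Finset.range (L + 1), 0 < Q M → 0 < binomPmf L p_src M) →
      (2 : ℝ) ^ (-(N_em : ℝ) * ∑ M ∈ Finset.range (L + 1),
        (if 0 < Q M then Q M * Real.logb 2 (Q M / binomPmf L p_src M) else 0)) ≤ η₁)
    {Ω : Type*} [MeasurableSpace Ω] (μ : Measure Ω) [IsProbabilityMeasure μ]
    (v : Ω → ℕ → ℕ) (N : Ω → ℕ) (m : Ω → ℕ → ℕ)
    (p_odd : ℝ) (hpodd0 : 0 ≤ p_odd) (hpodd : p_odd ≤ p_src)
    (hvsum : ∀ ω, ∑ M ∈ Finset.range (L + 1), v ω M = N_em)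
    (hvsupp : ∀ ω, ∀ M, M ∉ Finset.range (L + 1) → v ω M = 0)
    -- (a) `v` is multinomially distributed with `N_em` trials and per-trial law `𝔟_{L,p_odd}`
    (hmultinom : ∀ v₀ : ℕ → ℕ, (∀ M, M ∉ Finset.range (L + 1) → v₀ M = 0) →
      (∑ M ∈ Finset.range (L + 1), v₀ M = N_em) →
      (μ {ω | v ω = v₀}).toReal =
        (Nat.multinomial (Finset.range (L + 1)) v₀ : ℝ) *
          ∏ M ∈ Finset.range (L + 1), binomPmf L p_odd M ^ v₀ M)
    -- (b) a.s. on `{N ≥ 1}`: `N·P̃_{m^N}(M) ≤ v_M` for every `M`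
    (hcount : μ {ω | 1 ≤ N ω ∧ ∃ M : ℕ,
        v ω M < ((Finset.range (N ω)).filter (fun k => m ω k = M)).card} = 0) :
    (μ {ω | 1 ≤ N ω ∧
        ((N_em : ℝ) / (N ω : ℝ)) *
          (∑ M ∈ Finset.range (L + 1), binomPmf L p_src M * ν M + δ₁)
        < ∑ M ∈ Finset.range (L + 1), seqType (N ω) (m ω) M * ν M}).toReal ≤ η₁ := by
  set t := ∑ M ∈ range (L + 1), binomPmf L p_src M * ν M + δ₁
  have hν : ∀ M ∈ range (L + 1), 0 ≤ ν M := fun M hM => hν0 M (mem_range_succ_iff.mp hM)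
  have hbad : {ω | 1 ≤ N ω ∧ (N_em / N ω : ℝ) * t <
        ∑ M ∈ range (L + 1), seqType (N ω) (m ω) M * ν M} ⊆
      {ω | 1 ≤ N ω ∧ ∃ M, v ω M < ((range (N ω)).filter (fun k => m ω k = M)).card} ∪
        v ⁻¹' ((piAntidiag (range (L + 1)) N_em).filter
          fun k => N_em * t < ∑ M ∈ range (L + 1), (k M : ℝ) * ν M) := by
    rintro ω ⟨hN, hlt⟩
    by_cases hnull : ∃ M, v ω M < ((range (N ω)).filter (fun k => m ω k = M)).card
    · exact Or.inl ⟨hN, hnull⟩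
    push Not at hnull
    refine Or.inr (mem_filter.mpr ⟨mem_piAntidiag.mpr ⟨hvsum ω, fun M hM => ?_⟩,
      lt_sum_mul_of_lt_sum_seqType_mul hN hν hnull hlt⟩)
    by_contra h
    exact hM (hvsupp ω M h)
  calc μ.real _ ≤ _ := measureReal_le_sum_measureReal_preimage hcount hbad
    _ = multinomialTail (range (L + 1)) N_em (binomPmf L p_odd) ν t := by
        refine sum_congr rfl fun k hk => ?_
        obtain ⟨hksum, hksupp⟩ := mem_piAntidiag.mp (mem_filter.mp hk).1
        exact hmultinom k (fun M hM => by_contra fun h => hM (hksupp M h)) hksum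
    _ ≤ η₁ := multinomialTail_le_of_klDivBase2_le
        (fun M _ => binomPmf_nonneg hpsrc0 hpsrc1 M) (sum_binomPmf L p_src)
        (fun M _ => binomPmf_nonneg hpodd0 (hpodd.trans hpsrc1) M) (sum_binomPmf L p_odd) hν
        (fun M _ hM => binomPmf_le_binomPmf hpodd0 hpodd hpsrc1
          (not_lt.mp (mt (hνzero M) hM)))
        (le_add_of_nonneg_right hδ₁) hη₁ hKL

/-- Proposition 1: if `v` is multinomial with per-trial law `𝔟_{L,p_odd}`,
`p_odd ≤ p_src`, and a.s. on `{N ≥ 1}` one has `N·P̃_{m^N}(M) ≤ v_M` for all `M`, and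
`sup_{Q∈𝒬} 2^{−N_em·D(Q‖𝔟_{L,p_src})} ≤ η₁`, then
`Pr(N ≥ 1 ∧ E_{P̃_{m^N}}[ν] > (N_em/N)(E_{𝔟_{L,p_src}}[ν] + δ₁)) ≤ η₁`. -/
theorem stmt_1 (L : ℕ) (hL : 2 ≤ L) (N_em : ℕ) (hNem : 1 ≤ N_em)
    (p_src : ℝ) (hpsrc0 : 0 ≤ p_src) (hpsrc1 : p_src ≤ 1)
    (ν : ℕ → ℝ) (hν0 : ∀ M : ℕ, M ≤ L → 0 ≤ ν M)
    (hνzero : ∀ M : ℕ, (M : ℝ) < (L : ℝ) * p_src → ν M = 0)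
    (η₁ δ₁ : ℝ) (hη₁ : 0 ≤ η₁) (hδ₁ : 0 ≤ δ₁)
    -- `sup_{Q ∈ 𝒬} 2^{−N_em·D(Q‖𝔟_{L,p_src})} ≤ η₁` (a `Q ∈ 𝒬` whose support is not
    -- contained in that of `𝔟_{L,p_src}` has `D = +∞`, hence `2^{−N_em·D} = 0 ≤ η₁`)
    (hKL : ∀ Q : ℕ → ℝ, (∀ M, 0 ≤ Q M) → (∀ M, M ∉ Finset.range (L + 1) → Q M = 0) →
      (∑ M ∈ Finset.range (L + 1), Q M = 1) →
      (∑ M ∈ Finset.range (L + 1), Q M * ν M ≥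
        ∑ M ∈ Finset.range (L + 1), binomPmf L p_src M * ν M + δ₁) →
      (∀ M ∈ Finset.range (L + 1), 0 < Q M → 0 < binomPmf L p_src M) →
      (2 : ℝ) ^ (-(N_em : ℝ) * ∑ M ∈ Finset.range (L + 1),
        (if 0 < Q M then Q M * Real.logb 2 (Q M / binomPmf L p_src M) else 0)) ≤ η₁)
    {Ω : Type*} [MeasurableSpace Ω] (μ : Measure Ω) [IsProbabilityMeasure μ]
    (v : Ω → ℕ → ℕ) (N : Ω → ℕ) (m : Ω → ℕ → ℕ)
    (p_odd : ℝ) (hpodd0 : 0 ≤ p_odd) (hpodd : p_odd ≤ p_src)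
    (hvsum : ∀ ω, ∑ M ∈ Finset.range (L + 1), v ω M = N_em)
    (hvsupp : ∀ ω, ∀ M, M ∉ Finset.range (L + 1) → v ω M = 0)
    -- (a) `v` is multinomially distributed with `N_em` trials and per-trial law `𝔟_{L,p_odd}`
    (hmultinom : ∀ v₀ : ℕ → ℕ, (∀ M, M ∉ Finset.range (L + 1) → v₀ M = 0) →
      (∑ M ∈ Finset.range (L + 1), v₀ M = N_em) →
      (μ {ω | v ω = v₀}).toReal =
        (Nat.multinomial (Finset.range (L + 1)) v₀ : ℝ) *
          ∏ M ∈ Finset.range (L + 1), binomPmf L p_odd M ^ v₀ M)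
    (hNub : ∀ ω, N ω ≤ N_em)
    (hmvals : ∀ ω, ∀ k, k < N ω → m ω k ≤ L)
    -- (b) a.s. on `{N ≥ 1}`: `N·P̃_{m^N}(M) ≤ v_M` for every `M`
    (hcount : μ {ω | 1 ≤ N ω ∧ ∃ M : ℕ,
        v ω M < ((Finset.range (N ω)).filter (fun k => m ω k = M)).card} = 0) :
    (μ {ω | 1 ≤ N ω ∧
        ((N_em : ℝ) / (N ω : ℝ)) *
          (∑ M ∈ Finset.range (L + 1), binomPmf L p_src M * ν M + δ₁)
        < ∑ M ∈ Finset.range (L + 1), seqType (N ω) (m ω) M * ν M}).toReal ≤ η₁ :=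
  stmt_1_general L N_em p_src hpsrc0 hpsrc1 ν hν0 hνzero η₁ δ₁ hη₁ hδ₁ hKL μ v N m p_odd hpodd0
    hpodd hvsum hvsupp hmultinom hcount
end
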